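/- For every τ ∈ ℍ and every w ∈ ℂ with 0 < |q| < |q_w| < 1, the limit as z → 0 of ( P̃₁(w,z,τ) − 1/(2πiz) ) equals P₁(w,τ). -/

import Mathlib

/-!
Split off the `n = 0` term `1/(1 - q_z)` of `P̃₁`. For `q_z` in an annulus around `1` the
remaining terms are bounded by a multiple of `|q_w|^|n| + |q/q_w|^|n|`, so their sum `S` is
holomorphic near `z = 0`. The continuation `F` and `-1/(1 - q_z) - S` are holomorphic on a
punctured disc around `0` and agree on its upper half (where the defining series converges), so
they agree on the whole punctured disc, which is connected. Finally `1/(1 - eᵘ) + 1/u → 1/2`.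
-/

open Complex Filter Topology

/-- `e(x) = e^{2πix}`; thus `q = eF τ`, `q_w = eF w`, `q_z = eF z`. -/
noncomputable def eF (x : ℂ) : ℂ := Complex.exp (2 * (Real.pi : ℂ) * Complex.I * x)

open Metric Set

theorem isPreconnected_ball_diff_center {E : Type*} [NormedAddCommGroup E] [NormedSpace ℝ E]
    (hE : 1 < Module.rank ℝ E) (c : E) (r : ℝ) : IsPreconnected (ball c r \ {c}) := by
  rcases lt_or_ge 0 r with hr | hr
  · set e := OpenPartialHomeomorph.univBall c r
    have he : Function.Injective e := by
      simpa [e, injOn_univ] using e.injOn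
    have himage : e '' {0}ᶜ = ball c r \ {c} := by
      rw [compl_eq_univ_sdiff, image_sdiff he, ← OpenPartialHomeomorph.univBall_source c r,
        e.image_source_eq_target, OpenPartialHomeomorph.univBall_target c hr, image_singleton,
        OpenPartialHomeomorph.univBall_apply_zero]
    rw [← himage]
    exact (isConnected_compl_singleton_of_one_lt_rank hE 0).isPreconnected.image _
      (OpenPartialHomeomorph.continuous_univBall c r).continuousOn
  · simp [ball_eq_empty.mpr hr, isPreconnected_empty]

theorem norm_exp_sub_one_sub_div_sq_sub_half_le {u : ℂ} (hu0 : u ≠ 0) (hu : ‖u‖ ≤ 1) :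
    ‖(exp u - 1 - u) / u ^ 2 - 1 / 2‖ ≤ ‖u‖ := by
  have h3 := Complex.exp_bound hu (n := 3) (by norm_num)
  norm_num [Finset.sum_range_succ, Nat.factorial] at h3
  have hrw : (exp u - 1 - u) / u ^ 2 - 1 / 2 = (exp u - (1 + u + u ^ 2 / 2)) / u ^ 2 := by
    field_simp; ring
  rw [hrw, norm_div, norm_pow, div_le_iff₀ (by positivity)]
  calc _ ≤ ‖u‖ ^ 3 * (4 * (6 * 3 : ℝ)⁻¹) := by convert h3 using 3; ring
    _ ≤ ‖u‖ * ‖u‖ ^ 2 := by nlinarith [pow_nonneg (norm_nonneg u) 3]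

theorem tendsto_one_div_one_sub_exp_add_one_div :
    Tendsto (fun u : ℂ => 1 / (1 - exp u) + 1 / u) (𝓝[≠] 0) (𝓝 (1 / 2)) := by
  set h : ℂ → ℂ := fun u => (exp u - 1 - u) / u ^ 2
  have hh : Tendsto h (𝓝[≠] 0) (𝓝 (1 / 2)) := by
    rw [tendsto_iff_norm_sub_tendsto_zero]
    refine squeeze_zero' (Eventually.of_forall fun _ => norm_nonneg _) ?_
      (tendsto_norm_zero.mono_left nhdsWithin_le_nhds)
    filter_upwards [self_mem_nhdsWithin, nhdsWithin_le_nhds (closedBall_mem_nhds (0 : ℂ) one_pos)]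
      with u hu0 hu
    exact norm_exp_sub_one_sub_div_sq_sub_half_le hu0 (by simpa using hu)
  have hden : Tendsto (fun u => 1 + u * h u) (𝓝[≠] 0) (𝓝 1) := by
    simpa using tendsto_const_nhds.add ((tendsto_id.mono_left nhdsWithin_le_nhds).mul hh)
  have hlim := hh.div hden one_ne_zero
  rw [div_one] at hlim
  -- `1 / (1 - eᵘ) + 1 / u = h u / (1 + u h u)`
  refine hlim.congr' ?_
  filter_upwards [self_mem_nhdsWithin, hden.eventually_ne one_ne_zero] with u (hu : u ≠ 0) hden
  have hden_eq : 1 + u * h u = (exp u - 1) / u := by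
    simp only [h]; field_simp; ring
  have hexp : exp u - 1 ≠ 0 := by simpa [hden_eq, hu] using hden
  have : 1 - exp u ≠ 0 := by contrapose! hexp; linear_combination -hexp
  rw [Pi.div_apply, hden_eq]
  simp only [h]
  field_simp
  ring

theorem eqOn_ball_diff_zero_of_eqOn_upperHalf {f g : ℂ → ℂ} {r : ℝ} (hr : 0 < r)
    (hf : AnalyticOnNhd ℂ f (ball 0 r \ {0})) (hg : AnalyticOnNhd ℂ g (ball 0 r \ {0}))
    (hfg : ∀ z ∈ ball (0 : ℂ) r, 0 < z.im → f z = g z) : EqOn f g (ball 0 r \ {0}) := by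
  have hz₀ : (r / 2 : ℂ) * Complex.I ∈ ball (0 : ℂ) r ∩ {z | 0 < z.im} := by
    refine ⟨?_, by simp [hr]⟩
    rw [mem_ball_zero_iff, norm_mul, Complex.norm_I, mul_one, norm_div, Complex.norm_real,
      Real.norm_of_nonneg hr.le, Complex.norm_ofNat]
    linarith
  have hopen : IsOpen (ball (0 : ℂ) r ∩ {z | 0 < z.im}) :=
    isOpen_ball.inter (isOpen_lt continuous_const Complex.continuous_im)
  refine hf.eqOn_of_preconnected_of_eventuallyEq hg
    (isPreconnected_ball_diff_center (by simp [Complex.rank_real_complex]) 0 r)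
    ⟨hz₀.1, by simp [hr.ne']⟩ ?_
  filter_upwards [hopen.mem_nhds hz₀] with z hz
  exact hfg z hz.1 hz.2

theorem summable_pow_natAbs {r : ℝ} (h0 : 0 ≤ r) (h1 : r < 1) :
    Summable fun n : ℤ => r ^ n.natAbs := by
  have := summable_geometric_of_lt_one h0 h1
  exact Summable.of_nat_of_neg (by simpa using this) (by simpa using this)

theorem one_le_norm_intCast {n : ℤ} (hn : n ≠ 0) : 1 ≤ ‖(n : ℂ)‖ := by
  rw [Complex.norm_intCast]
  exact_mod_cast Int.one_le_abs hn

/-- `P̃₁(w,z,τ) = -1/(1 - q_z) - nonzeroTermSum q q_w q_z` and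
`P₁(w,τ) = -1/2 - nonzeroTermSum q q_w 1`. -/
noncomputable def nonzeroTerm (p y : ℂ) (n : ℤ) (x : ℂ) : ℂ :=
  if n = 0 then 0 else y ^ n / (1 - x * p ^ n)

noncomputable def nonzeroTermSum (p y x : ℂ) : ℂ := ∑' n : ℤ, nonzeroTerm p y n x

section NonzeroTermSum

variable {p x y : ℂ} {m : ℕ} {a b : ℝ}

theorem one_sub_norm_mul_le_norm_one_sub_mul_pow (hm : m ≠ 0) (hp : ‖p‖ ≤ 1) :
    1 - ‖x‖ * ‖p‖ ≤ ‖1 - x * p ^ m‖ := by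
  have : ‖x * p ^ m‖ ≤ ‖x‖ * ‖p‖ := by
    rw [norm_mul, norm_pow]
    gcongr
    exact pow_le_of_le_one (norm_nonneg p) hp hm
  linarith [norm_sub_norm_le (1 : ℂ) (x * p ^ m), norm_one (α := ℂ)]

theorem norm_sub_norm_div_le_norm_one_sub_mul_zpow_neg (hm : m ≠ 0) (hp : ‖p‖ ≤ 1)
    (hp0 : p ≠ 0) : (‖x‖ - ‖p‖) / ‖p‖ ^ m ≤ ‖1 - x * p ^ (-(m : ℤ))‖ := by
  have hpm : 1 - x * p ^ (-(m : ℤ)) = -(x - p ^ m) / p ^ m := by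
    rw [zpow_neg, zpow_natCast]
    field_simp
    ring
  rw [hpm, norm_div, norm_neg, norm_pow]
  gcongr
  calc ‖x‖ - ‖p‖ ≤ ‖x‖ - ‖p‖ ^ m := by gcongr; exact pow_le_of_le_one (norm_nonneg p) hp hm
    _ = ‖x‖ - ‖p ^ m‖ := by rw [norm_pow]
    _ ≤ ‖x - p ^ m‖ := norm_sub_norm_le x (p ^ m)

theorem one_sub_mul_zpow_ne_zero (hp0 : p ≠ 0) (hpx : ‖p‖ < ‖x‖) (hxp : ‖x‖ * ‖p‖ < 1)
    {n : ℤ} (hn : n ≠ 0) : 1 - x * p ^ n ≠ 0 := by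
  have hp : ‖p‖ ≤ 1 := by nlinarith [norm_nonneg p]
  rw [← norm_pos_iff]
  obtain ⟨m, rfl | rfl⟩ := Int.eq_nat_or_neg n
  · have hm : m ≠ 0 := by exact_mod_cast hn
    simpa using (sub_pos.mpr hxp).trans_le (one_sub_norm_mul_le_norm_one_sub_mul_pow hm hp)
  · have hm : m ≠ 0 := by simpa using hn
    exact (div_pos (sub_pos.mpr hpx) (by positivity)).trans_le
      (norm_sub_norm_div_le_norm_one_sub_mul_zpow_neg hm hp hp0)

theorem norm_nonzeroTerm_le (hp0 : p ≠ 0) (hpa : ‖p‖ < a) (hbp : b * ‖p‖ < 1)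
    (hxa : a ≤ ‖x‖) (hxb : ‖x‖ ≤ b) (n : ℤ) :
    ‖nonzeroTerm p y n x‖ ≤
      ‖y‖ ^ n.natAbs / (1 - b * ‖p‖) + (‖p‖ / ‖y‖) ^ n.natAbs / (a - ‖p‖) := by
  have hp : ‖p‖ ≤ 1 := by nlinarith [norm_nonneg p]
  have h₁ : 0 ≤ ‖y‖ ^ n.natAbs / (1 - b * ‖p‖) := div_nonneg (by positivity) (by linarith)
  have h₂ : 0 ≤ (‖p‖ / ‖y‖) ^ n.natAbs / (a - ‖p‖) := div_nonneg (by positivity) (by linarith)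
  rw [nonzeroTerm]
  split_ifs with hn
  · simpa using add_nonneg h₁ h₂
  obtain ⟨m, rfl | rfl⟩ := Int.eq_nat_or_neg n
  · have hm : m ≠ 0 := by exact_mod_cast hn
    refine le_add_of_le_of_nonneg ?_ h₂
    rw [norm_div, zpow_natCast, norm_pow, Int.natAbs_natCast]
    refine div_le_div_of_nonneg_left (by positivity) (by linarith) ?_
    calc 1 - b * ‖p‖ ≤ 1 - ‖x‖ * ‖p‖ := by gcongr
      _ ≤ _ := one_sub_norm_mul_le_norm_one_sub_mul_pow hm hp
  · have hm : m ≠ 0 := by simpa using hn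
    refine le_add_of_nonneg_of_le h₁ ?_
    calc ‖y ^ (-(m : ℤ)) / (1 - x * p ^ (-(m : ℤ)))‖
        ≤ (‖y‖ ^ m)⁻¹ / ((‖x‖ - ‖p‖) / ‖p‖ ^ m) := by
          rw [norm_div, norm_zpow, zpow_neg, zpow_natCast]
          gcongr
          · exact div_pos (by linarith) (by positivity)
          · exact norm_sub_norm_div_le_norm_one_sub_mul_zpow_neg hm hp hp0
      _ = (‖p‖ / ‖y‖) ^ m / (‖x‖ - ‖p‖) := by
          field_simp
          rw [div_pow, div_div]
      _ ≤ _ := by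
          rw [Int.natAbs_neg, Int.natAbs_natCast]
          gcongr

theorem summable_nonzeroTerm_bound (hpy : ‖p‖ < ‖y‖) (hy : ‖y‖ < 1) :
    Summable fun n : ℤ =>
      ‖y‖ ^ n.natAbs / (1 - b * ‖p‖) + (‖p‖ / ‖y‖) ^ n.natAbs / (a - ‖p‖) :=
  ((summable_pow_natAbs (norm_nonneg y) hy).div_const _).add
    ((summable_pow_natAbs (by positivity)
      ((div_lt_one (by linarith [norm_nonneg p])).mpr hpy)).div_const _)

theorem summable_nonzeroTerm (hp0 : p ≠ 0) (hpx : ‖p‖ < ‖x‖) (hxp : ‖x‖ * ‖p‖ < 1)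
    (hpy : ‖p‖ < ‖y‖) (hy : ‖y‖ < 1) : Summable fun n => nonzeroTerm p y n x :=
  .of_norm_bounded (summable_nonzeroTerm_bound hpy hy)
    (norm_nonzeroTerm_le hp0 hpx hxp le_rfl le_rfl)

theorem tsum_eq_one_div_one_sub_add_nonzeroTermSum (hp0 : p ≠ 0) (hpx : ‖p‖ < ‖x‖)
    (hxp : ‖x‖ * ‖p‖ < 1) (hpy : ‖p‖ < ‖y‖) (hy : ‖y‖ < 1) :
    ∑' n : ℤ, y ^ n / (1 - x * p ^ n) = 1 / (1 - x) + nonzeroTermSum p y x := by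
  have hs : Summable fun n : ℤ => y ^ n / (1 - x * p ^ n) := by
    have h : (fun n : ℤ => y ^ n / (1 - x * p ^ n)) =
        Function.update (fun n => nonzeroTerm p y n x) 0 (1 / (1 - x)) := by
      ext n
      rcases eq_or_ne n 0 with rfl | hn <;> simp [nonzeroTerm, *]
    rw [h]
    exact (summable_nonzeroTerm hp0 hpx hxp hpy hy).update 0 _
  rw [hs.tsum_eq_add_tsum_ite 0]
  simp [nonzeroTermSum, nonzeroTerm]

theorem differentiableOn_nonzeroTermSum (hp0 : p ≠ 0) (hpa : ‖p‖ < a) (hbp : b * ‖p‖ < 1)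
    (hpy : ‖p‖ < ‖y‖) (hy : ‖y‖ < 1) :
    DifferentiableOn ℂ (nonzeroTermSum p y) {x | a < ‖x‖ ∧ ‖x‖ < b} := by
  have hopen : IsOpen {x : ℂ | a < ‖x‖ ∧ ‖x‖ < b} :=
    (isOpen_lt continuous_const continuous_norm).inter (isOpen_lt continuous_norm continuous_const)
  refine differentiableOn_tsum_of_summable_norm (summable_nonzeroTerm_bound hpy hy)
    (fun n => ?_) hopen fun n x hx => norm_nonzeroTerm_le hp0 hpa hbp hx.1.le hx.2.le n
  unfold nonzeroTerm
  split_ifs with hn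
  · exact differentiableOn_const 0
  · refine (differentiableOn_const _).div (by fun_prop) fun x hx => ?_
    exact one_sub_mul_zpow_ne_zero hp0 (hpa.trans hx.1)
      ((mul_le_mul_of_nonneg_right hx.2.le (norm_nonneg p)).trans_lt hbp) hn

end NonzeroTermSum

theorem eF_zero : eF 0 = 1 := by simp [eF]

theorem differentiable_eF : Differentiable ℂ eF := by
  unfold eF; fun_prop

theorem norm_eF (z : ℂ) : ‖eF z‖ = Real.exp (-(2 * Real.pi * z.im)) := by
  rw [eF, Complex.norm_exp]
  congr 1
  simp [Complex.mul_re, Complex.mul_im]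

theorem norm_eF_lt_norm_eF_iff {a b : ℂ} : ‖eF a‖ < ‖eF b‖ ↔ b.im < a.im := by
  rw [norm_eF, norm_eF, Real.exp_lt_exp, neg_lt_neg_iff,
    mul_lt_mul_iff_right₀ (by positivity : (0 : ℝ) < 2 * Real.pi)]

theorem norm_eF_lt_one_iff {z : ℂ} : ‖eF z‖ < 1 ↔ 0 < z.im := by
  simpa [eF_zero] using norm_eF_lt_norm_eF_iff (a := z) (b := 0)

theorem ne_lattice_of_norm_lt {τ z : ℂ} (hz : z ≠ 0) (h1 : ‖z‖ < 1) (hτ : ‖z‖ < τ.im)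
    (l m : ℤ) : z ≠ l * τ + m := by
  rintro rfl
  rcases eq_or_ne l 0 with rfl | hl
  · have hm : m ≠ 0 := by rintro rfl; simp at hz
    simp only [Int.cast_zero, zero_mul, zero_add] at h1
    linarith [one_le_norm_intCast hm]
  · have hl1 : (1 : ℝ) ≤ |(l : ℝ)| := by exact_mod_cast Int.one_le_abs hl
    have him : τ.im ≤ |(l * τ + m : ℂ).im| := by
      simp only [Complex.add_im, Complex.mul_im, Complex.intCast_re, Complex.intCast_im,
        zero_mul, add_zero, abs_mul]
      nlinarith [le_abs_self τ.im, abs_nonneg τ.im]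
    linarith [Complex.abs_im_le_norm (l * τ + m : ℂ)]

theorem eF_ne_one {z : ℂ} (hz : z ≠ 0) (h1 : ‖z‖ < 1) : eF z ≠ 1 := by
  rw [eF, Ne, Complex.exp_eq_one_iff]
  rintro ⟨n, hn⟩
  have hc : 2 * (Real.pi : ℂ) * Complex.I ≠ 0 := by simp [Real.pi_ne_zero]
  have hzn : z = n := mul_left_cancel₀ hc (by linear_combination hn)
  have hn0 : n ≠ 0 := by rintro rfl; simp [hzn] at hz
  linarith [one_le_norm_intCast hn0, hzn ▸ h1]

theorem tendsto_one_div_one_sub_eF_add_one_div :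
    Tendsto (fun z : ℂ => 1 / (1 - eF z) + 1 / (2 * (Real.pi : ℂ) * Complex.I * z))
      (𝓝[≠] 0) (𝓝 (1 / 2)) := by
  have hc : 2 * (Real.pi : ℂ) * Complex.I ≠ 0 := by simp [Real.pi_ne_zero]
  have hlin : Tendsto (fun z : ℂ => 2 * (Real.pi : ℂ) * Complex.I * z) (𝓝[≠] 0) (𝓝[≠] 0) :=
    tendsto_nhdsWithin_of_tendsto_nhds_of_eventually_within _
      (((continuous_const_mul _).tendsto' 0 0 (mul_zero _)).mono_left nhdsWithin_le_nhds)
      (eventually_mem_nhdsWithin.mono fun z hz => mul_ne_zero hc hz)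
  exact tendsto_one_div_one_sub_exp_add_one_div.comp hlin

theorem eventually_analyticAt_nonzeroTermSum_eF {p y : ℂ} (hp0 : p ≠ 0)
    (hpy : ‖p‖ < ‖y‖) (hy : ‖y‖ < 1) :
    ∀ᶠ z in 𝓝 0, AnalyticAt ℂ (fun z => nonzeroTermSum p y (eF z)) z := by
  have hy0 : 0 < ‖y‖ := (norm_nonneg p).trans_lt hpy
  set U := {x : ℂ | ‖y‖ < ‖x‖ ∧ ‖x‖ < ‖y‖⁻¹}
  have hS : DifferentiableOn ℂ (nonzeroTermSum p y) U :=
    differentiableOn_nonzeroTermSum hp0 hpy (by rw [inv_mul_lt_one₀ hy0]; exact hpy) hpy hy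
  have hU : IsOpen (eF ⁻¹' U) :=
    ((isOpen_lt continuous_const continuous_norm).inter
      (isOpen_lt continuous_norm continuous_const)).preimage differentiable_eF.continuous
  have h0 : (0 : ℂ) ∈ eF ⁻¹' U := by simp [U, eF_zero, hy, one_lt_inv₀ hy0]
  filter_upwards [hU.mem_nhds h0] with z hz
  exact (hS.comp differentiable_eF.differentiableOn (mapsTo_preimage eF U)).analyticOnNhd hU z hz

theorem Ptilde1_limit_at_zero_general (τ w : ℂ)
    (hqw : ‖eF τ‖ < ‖eF w‖) (hw1 : ‖eF w‖ < 1)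
    (F : ℂ → ℂ)
    (hFanal : ∀ z : ℂ, (∀ l m : ℤ, z ≠ (l : ℂ) * τ + (m : ℂ)) → AnalyticAt ℂ F z)
    (hFagree : ∀ z : ℂ,
      ‖eF τ‖ < ‖eF z‖ → ‖eF z‖ < 1 →
      F z = -∑' n : ℤ, eF w ^ n / (1 - eF z * eF τ ^ n)) :
    Filter.Tendsto (fun z : ℂ => F z - 1 / (2 * (Real.pi : ℂ) * Complex.I * z))
      (𝓝[≠] (0 : ℂ))
      (𝓝 (-(1/2) - ∑' n : ℤ, if n = 0 then 0 else eF w ^ n / (1 - eF τ ^ n))) := by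
  have hp0 : eF τ ≠ 0 := Complex.exp_ne_zero _
  have hτ : 0 < τ.im := norm_eF_lt_one_iff.mp (hqw.trans hw1)
  set S : ℂ → ℂ := fun z => nonzeroTermSum (eF τ) (eF w) (eF z)
  obtain ⟨r₀, hr₀, hS⟩ := eventually_nhds_iff_ball.mp
    (eventually_analyticAt_nonzeroTermSum_eF hp0 hqw hw1)
  set r := min r₀ (min 1 τ.im)
  have hr : 0 < r := lt_min hr₀ (lt_min one_pos hτ)
  have hball : ∀ z ∈ ball (0 : ℂ) r, ‖z‖ < r₀ ∧ ‖z‖ < 1 ∧ ‖z‖ < τ.im := fun z hz => by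
    simpa [r] using hz
  have hFeq : EqOn F (fun z => -(1 / (1 - eF z)) - S z) (ball 0 r \ {0}) := by
    refine eqOn_ball_diff_zero_of_eqOn_upperHalf hr
      (fun z hz => hFanal z (ne_lattice_of_norm_lt hz.2 (hball z hz.1).2.1 (hball z hz.1).2.2))
      (fun z hz => ?_) fun z hz him => ?_
    · have hne : 1 - eF z ≠ 0 := sub_ne_zero.mpr (eF_ne_one hz.2 (hball z hz.1).2.1).symm
      exact (analyticAt_const.div (analyticAt_const.sub (differentiable_eF.analyticAt z))
        hne).neg.sub (hS z (mem_ball_zero_iff.mpr (hball z hz.1).1))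
    · have hz1 : ‖eF z‖ < 1 := norm_eF_lt_one_iff.mpr him
      have hzτ : ‖eF τ‖ < ‖eF z‖ :=
        norm_eF_lt_norm_eF_iff.mpr ((Complex.im_le_norm z).trans_lt (hball z hz).2.2)
      rw [hFagree z hzτ hz1, tsum_eq_one_div_one_sub_add_nonzeroTermSum hp0 hzτ
        (mul_lt_one_of_nonneg_of_lt_one_left (norm_nonneg _) hz1 (hqw.trans hw1).le) hqw hw1]
      ring
  have hS0 : S 0 = ∑' n : ℤ, if n = 0 then 0 else eF w ^ n / (1 - eF τ ^ n) := by
    simp [S, nonzeroTermSum, nonzeroTerm, eF_zero]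
  rw [← hS0, show -(1 / 2) - S 0 = -S 0 - 1 / 2 by ring]
  have hS_cont : Tendsto S (𝓝[≠] 0) (𝓝 (S 0)) :=
    (hS 0 (mem_ball_self hr₀)).continuousAt.continuousWithinAt.tendsto
  refine (hS_cont.neg.sub tendsto_one_div_one_sub_eF_add_one_div).congr' ?_
  filter_upwards [self_mem_nhdsWithin, nhdsWithin_le_nhds (ball_mem_nhds 0 hr)] with z hz0 hzr
  rw [hFeq ⟨hzr, hz0⟩]
  ring

/-- For every `τ ∈ ℍ` and `w` with `0 < |q| < |q_w| < 1`, the meromorphic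
continuation (in `z`) `F` of `P̃₁(w,z,τ) := −∑_{n∈ℤ} q_w^n/(1 − q_z q^n)` satisfies
`lim_{z→0} ( P̃₁(w,z,τ) − 1/(2πiz) ) = P₁(w,τ) := −1/2 − ∑_{n≠0} q_w^n/(1−q^n)`. -/
theorem Ptilde1_limit_at_zero (τ w : ℂ) (hτ : 0 < τ.im)
    (hqw : ‖eF τ‖ < ‖eF w‖) (hw1 : ‖eF w‖ < 1)
    (F : ℂ → ℂ)
    (hFanal : ∀ z : ℂ, (∀ l m : ℤ, z ≠ (l : ℂ) * τ + (m : ℂ)) → AnalyticAt ℂ F z)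
    (hFagree : ∀ z : ℂ,
      ‖eF τ‖ < ‖eF z‖ → ‖eF z‖ < 1 →
      F z = -∑' n : ℤ, eF w ^ n / (1 - eF z * eF τ ^ n)) :
    Filter.Tendsto (fun z : ℂ => F z - 1 / (2 * (Real.pi : ℂ) * Complex.I * z))
      (𝓝[≠] (0 : ℂ))
      (𝓝 (-(1/2) - ∑' n : ℤ, if n = 0 then 0 else eF w ^ n / (1 - eF τ ^ n))) :=
  Ptilde1_limit_at_zero_general τ w hqw hw1 F hFanal hFagree
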